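/- arXiv:cs/0612102 — 6 statements merged into one kernel-verified Lean document; each statement's English description precedes it below -/
import Mathlib

section
/- Let (Ω, μ) be a probability space, k ≥ 1, U_1, …, U_k finite sets, and for each i ∈ {1,…,k} and x ∈ U_i let E(i,x) be an event. Let C be a finite family of nonempty subsets of {1,…,k} and set Q = ⋃_{c ∈ C} ⋂_{i ∈ c} ⋃_{x ∈ U_i} E(i,x). For σ ⊆ {1,…,k} define N(σ) = (−1)^{|σ|+1} · ∑_{s ⊆ C, ⋃s = σ} (−1)^{|s|}. Then μ(Q) = ∑ N(sig(T̄)) · (−1)^{|T̄|} · μ(⋂_{i ∈ {1,…,k}} ⋂_{x ∈ T_i} E(i,x)), where the sum ranges over all k-tuples T̄ = (T_1, …, T_k) with T_i ⊆ U_i and at least one T_i nonempty, and an intersection over an empty index set is taken to be Ω. (This is the Expansion Theorem: the probability of a conjunctive query equals the expansion of any of its coverages.) -/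
/-!
Write `A i = ⋃ x ∈ U i, E i x`. Inclusion–exclusion over the family `C` expresses the indicator of
`Q` as `∑_{∅ ≠ s ⊆ C} (-1)^(|s|+1) 𝟙[⋂ i ∈ ⋃ s, A i]`. A second inclusion–exclusion writes each
`𝟙[A i]` as an alternating sum over nonempty `t ⊆ U i`, and expanding the product over `i ∈ σ`
gives a sum over the tuples `T` with `sig T = σ`. Exchanging the sums over `s` and `T` collects,
for each `T`, exactly the coefficient `N(sig T)`; integrating the resulting identity of
indicator functions against `μ` gives the theorem.
-/

open Finset MeasureTheory

section Signature

variable {ι α : Type*} [Fintype ι]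

def sig (T : ι → Finset α) : Finset ι := univ.filter fun i => (T i).Nonempty

theorem sig_nonempty_iff (T : ι → Finset α) : (sig T).Nonempty ↔ ∃ i, (T i).Nonempty := by
  simp [sig, filter_nonempty_iff]

theorem sum_sig_card (T : ι → Finset α) : ∑ i ∈ sig T, #(T i) = ∑ i, #(T i) :=
  sum_subset (subset_univ _) fun i _ hi => by simpa [sig] using hi

theorem biInter_sig {Ω : Type*} (T : ι → Finset α) (E : ι → α → Set Ω) :
    ⋂ i ∈ sig T, ⋂ x ∈ T i, E i x = ⋂ i, ⋂ x ∈ T i, E i x := by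
  ext ω
  simp only [sig, mem_filter, mem_univ, true_and, Set.mem_iInter]
  exact ⟨fun h i x hx => h i ⟨x, hx⟩ x hx, fun h i _ => h i⟩

theorem prod_sum_powerset_nonempty [DecidableEq ι] {R : Type*} [CommSemiring R]
    (U : ι → Finset α) (w : ι → Finset α → R) (σ : Finset ι) :
    ∏ i ∈ σ, ∑ t ∈ (U i).powerset with t.Nonempty, w i t
      = ∑ T ∈ Fintype.piFinset (fun i => (U i).powerset) with sig T = σ,
          ∏ i ∈ σ, w i (T i) := by
  classical
  -- pad the product to all of `ι`: off `σ` only `t = ∅` contributes, with weight `1`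
  set v : ι → Finset α → R := fun i t =>
    if (t.Nonempty ↔ i ∈ σ) then (if i ∈ σ then w i t else 1) else 0
  have hfactor : ∀ i, ∑ t ∈ (U i).powerset, v i t
      = if i ∈ σ then ∑ t ∈ (U i).powerset with t.Nonempty, w i t else 1 := by
    intro i
    by_cases hi : i ∈ σ
    · simp [v, hi, sum_filter]
    · simp [v, hi, not_nonempty_iff_eq_empty]
  calc ∏ i ∈ σ, ∑ t ∈ (U i).powerset with t.Nonempty, w i t
      = ∏ i, ∑ t ∈ (U i).powerset, v i t := by
        rw [prod_congr rfl fun i _ => hfactor i, prod_ite_mem, univ_inter]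
    _ = ∑ T ∈ Fintype.piFinset (fun i => (U i).powerset), ∏ i, v i (T i) := prod_univ_sum _ _
    _ = _ := by
        rw [sum_filter]
        refine sum_congr rfl fun T _ => ?_
        rw [prod_ite_zero, prod_ite_mem, univ_inter]
        congr 1
        simp [sig, Finset.ext_iff]

end Signature

theorem biInter_biInter_eq_biInter_sup {ι Ω : Type*} [DecidableEq ι] (s : Finset (Finset ι))
    (A : ι → Set Ω) : ⋂ c ∈ s, ⋂ i ∈ c, A i = ⋂ i ∈ s.sup id, A i := by
  rw [sup_eq_biUnion, set_biInter_biUnion]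
  rfl

theorem sup_id_nonempty_iff {ι : Type*} [DecidableEq ι] {s : Finset (Finset ι)}
    (hs : ∀ c ∈ s, c.Nonempty) : (s.sup id).Nonempty ↔ s.Nonempty := by
  refine ⟨fun h => ?_, fun ⟨c, hc⟩ => (hs c hc).mono (le_sup (f := id) hc)⟩
  by_contra h'
  simp [not_nonempty_iff_eq_empty.1 h'] at h

section Indicator

variable {Ω : Type*}

theorem indicator_biInter_one_apply {ι R : Type*} [CommSemiring R] (σ : Finset ι)
    (A : ι → Set Ω) (ω : Ω) :
    (⋂ i ∈ σ, A i).indicator (1 : Ω → R) ω = ∏ i ∈ σ, (A i).indicator 1 ω := by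
  rw [prod_indicator_const_apply, one_pow]

theorem indicator_biUnion_one_apply {ι R : Type*} [CommRing R] (s : Finset ι)
    (A : ι → Set Ω) (ω : Ω) :
    (⋃ i ∈ s, A i).indicator (1 : Ω → R) ω
      = ∑ t ∈ s.powerset with t.Nonempty, (-1) ^ (#t + 1) * (⋂ i ∈ t, A i).indicator 1 ω := by
  simp [indicator_biUnion_eq_sum_powerset]

variable {ι α : Type*} [Fintype ι] [DecidableEq ι]

theorem indicator_biInter_biUnion_apply (U : ι → Finset α) (E : ι → α → Set Ω)
    (σ : Finset ι) (ω : Ω) :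
    (⋂ i ∈ σ, ⋃ x ∈ U i, E i x).indicator (1 : Ω → ℝ) ω
      = ∑ T ∈ Fintype.piFinset (fun i => (U i).powerset) with sig T = σ,
          (-1) ^ (#σ + ∑ i, #(T i)) * (⋂ i, ⋂ x ∈ T i, E i x).indicator 1 ω := by
  rw [indicator_biInter_one_apply]
  simp only [indicator_biUnion_one_apply]
  rw [prod_sum_powerset_nonempty]
  refine sum_congr rfl fun T hT => ?_
  obtain rfl := (mem_filter.1 hT).2
  rw [prod_mul_distrib, prod_pow_eq_pow_sum, ← indicator_biInter_one_apply, biInter_sig,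
    sum_add_distrib, sum_sig_card, card_eq_sum_ones, add_comm]

end Indicator

section Coverage

variable {ι α Ω : Type*} [Fintype ι] [DecidableEq ι]

def coverageCoeff (C : Finset (Finset ι)) (σ : Finset ι) : ℝ :=
  (-1) ^ (#σ + 1) * ∑ s ∈ C.powerset with s.sup id = σ, (-1) ^ #s

theorem indicator_biUnion_biInter_biUnion_apply (U : ι → Finset α) (E : ι → α → Set Ω)
    (C : Finset (Finset ι)) (hC : ∀ c ∈ C, c.Nonempty) (ω : Ω) :
    (⋃ c ∈ C, ⋂ i ∈ c, ⋃ x ∈ U i, E i x).indicator (1 : Ω → ℝ) ω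
      = ∑ T ∈ Fintype.piFinset (fun i => (U i).powerset) with ∃ i, (T i).Nonempty,
          coverageCoeff C (sig T) * (-1) ^ (∑ i, #(T i))
            * (⋂ i, ⋂ x ∈ T i, E i x).indicator 1 ω := by
  simp only [indicator_biUnion_one_apply, biInter_biInter_eq_biInter_sup,
    indicator_biInter_biUnion_apply, mul_sum]
  rw [sum_comm' (t' := (Fintype.piFinset fun i => (U i).powerset).filter
      fun T => ∃ i, (T i).Nonempty)
    (s' := fun T => C.powerset.filter fun s => s.sup id = sig T)]
  · refine sum_congr rfl fun T _ => ?_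
    simp only [coverageCoeff, sum_mul, mul_sum]
    refine sum_congr rfl fun s hs => ?_
    rw [(mem_filter.1 hs).2, pow_add, pow_add, pow_add]
    ring
  · -- for `s ⊆ C`, `s ≠ ∅ ↔ s.sup id ≠ ∅` since the members of `C` are nonempty
    intro s T
    simp only [mem_filter, mem_powerset]
    constructor
    · rintro ⟨⟨hsC, hs⟩, hT, hsig⟩
      refine ⟨⟨hsC, hsig.symm⟩, hT, (sig_nonempty_iff T).1 ?_⟩
      rwa [hsig, sup_id_nonempty_iff fun c hc => hC c (hsC hc)]
    · rintro ⟨⟨hsC, hsig⟩, hT, hex⟩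
      refine ⟨⟨hsC, ?_⟩, hT, hsig.symm⟩
      rwa [← sup_id_nonempty_iff fun c hc => hC c (hsC hc), hsig, sig_nonempty_iff]

end Coverage

theorem measureReal_eq_sum_of_indicator_eq {Ω ι : Type*} [MeasurableSpace Ω] {μ : Measure Ω}
    [IsFiniteMeasure μ] {Q : Set Ω} (hQ : MeasurableSet Q) (s : Finset ι) (a : ι → ℝ)
    {S : ι → Set Ω} (hS : ∀ T ∈ s, MeasurableSet (S T))
    (h : ∀ ω, Q.indicator (1 : Ω → ℝ) ω = ∑ T ∈ s, a T * (S T).indicator 1 ω) :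
    μ.real Q = ∑ T ∈ s, a T * μ.real (S T) := by
  calc μ.real Q = ∫ ω, Q.indicator 1 ω ∂μ := (integral_indicator_one hQ).symm
    _ = ∫ ω, ∑ T ∈ s, a T * (S T).indicator 1 ω ∂μ := by simp_rw [h]
    _ = ∑ T ∈ s, ∫ ω, a T * (S T).indicator 1 ω ∂μ :=
        integral_finsetSum _ fun T hT => ((integrable_const 1).indicator (hS T hT)).const_mul _
    _ = ∑ T ∈ s, a T * μ.real (S T) := by
        refine sum_congr rfl fun T hT => ?_
        rw [integral_const_mul, integral_indicator_one (hS T hT)]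

theorem stmt_0_general {Ω : Type*} [MeasurableSpace Ω] (μ : Measure Ω) [IsProbabilityMeasure μ]
    {α : Type*} (k : ℕ) (U : Fin k → Finset α)
    (E : Fin k → α → Set Ω) (hE : ∀ i x, MeasurableSet (E i x))
    (C : Finset (Finset (Fin k))) (hC : ∀ c ∈ C, c.Nonempty) :
    (μ (⋃ c ∈ C, ⋂ i ∈ c, ⋃ x ∈ U i, E i x)).toReal
    = ∑ T ∈ ((Fintype.piFinset fun i => (U i).powerset).filter
        fun T => ∃ i, (T i).Nonempty),
        ((-1 : ℝ) ^ ((Finset.univ.filter fun i => (T i).Nonempty).card + 1) *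
          ∑ s ∈ C.powerset.filter
            (fun s => s.sup id = Finset.univ.filter fun i => (T i).Nonempty),
            (-1 : ℝ) ^ s.card) *
        (-1 : ℝ) ^ (∑ i, (T i).card) * (μ (⋂ i, ⋂ x ∈ T i, E i x)).toReal := by
  have hQ : MeasurableSet (⋃ c ∈ C, ⋂ i ∈ c, ⋃ x ∈ U i, E i x) :=
    C.measurableSet_biUnion fun c _ => c.measurableSet_biInter fun i _ =>
      (U i).measurableSet_biUnion fun x _ => hE i x
  have hET : ∀ T : Fin k → Finset α, MeasurableSet (⋂ i, ⋂ x ∈ T i, E i x) := fun T =>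
    .iInter fun i => (T i).measurableSet_biInter fun x _ => hE i x
  -- on `Fin k` the `∃ i` filter elaborates with `Nat.decidableExistsFin`, hence `convert`
  convert measureReal_eq_sum_of_indicator_eq (μ := μ) hQ _ _ (fun T _ => hET T)
    (indicator_biUnion_biInter_biUnion_apply U E C hC) <;> rfl

/-- Expansion Theorem: Let `(Ω, μ)` be a probability space, `k ≥ 1`,
`U_1, …, U_k` finite sets, and `E(i,x)` an event for each `i` and `x ∈ U_i`. Let `C` be
a finite family of nonempty subsets of `{1,…,k}` and
`Q = ⋃_{c ∈ C} ⋂_{i ∈ c} ⋃_{x ∈ U_i} E(i,x)`. With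
`N(σ) = (−1)^{|σ|+1} · ∑_{s ⊆ C, ⋃s = σ} (−1)^{|s|}`, one has
`μ(Q) = ∑ N(sig(T̄)) · (−1)^{|T̄|} · μ(⋂_i ⋂_{x ∈ T_i} E(i,x))`, the sum ranging over
all tuples `T̄ = (T_1,…,T_k)` with `T_i ⊆ U_i` and at least one `T_i` nonempty, where
`sig(T̄) = {i : T_i ≠ ∅}` and `|T̄| = |T_1| + … + |T_k|` (an intersection over an empty
index set is `Ω`). -/
theorem stmt_0 {Ω : Type*} [MeasurableSpace Ω] (μ : Measure Ω) [IsProbabilityMeasure μ]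
    {α : Type*} [DecidableEq α] (k : ℕ) (hk : 1 ≤ k) (U : Fin k → Finset α)
    (E : Fin k → α → Set Ω) (hE : ∀ i x, MeasurableSet (E i x))
    (C : Finset (Finset (Fin k))) (hC : ∀ c ∈ C, c.Nonempty) :
    (μ (⋃ c ∈ C, ⋂ i ∈ c, ⋃ x ∈ U i, E i x)).toReal
    = ∑ T ∈ ((Fintype.piFinset fun i => (U i).powerset).filter
        fun T => ∃ i, (T i).Nonempty),
        ((-1 : ℝ) ^ ((Finset.univ.filter fun i => (T i).Nonempty).card + 1) *
          ∑ s ∈ C.powerset.filter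
            (fun s => s.sup id = Finset.univ.filter fun i => (T i).Nonempty),
            (-1 : ℝ) ^ s.card) *
        (-1 : ℝ) ^ (∑ i, (T i).card) * (μ (⋂ i, ⋂ x ∈ T i, E i x)).toReal :=
  stmt_0_general μ k U E hE C hC
end

section
/- For every family ψ of subsets of {1,…,k} and every σ ⊆ {1,…,k}: (−1)^{|σ|} · ∑_{G ⊆ Min(ψ), ⋃G = σ} (−1)^{|G|} = ∑_{τ ⊆ σ, τ ∉ UP(ψ)} (−1)^{|τ|}. -/
/-!
Write `M = Min(ψ)`. Expanding `[⋃G = σ] (-1)^{|σ|}` as `∑_{⋃G ⊆ τ ⊆ σ} (-1)^{|τ|}` and swapping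
the sums, the left-hand side becomes `∑_{τ ⊆ σ} (-1)^{|τ|} ∑_{G ⊆ M, ⋃G ⊆ τ} (-1)^{|G|}`.
The inner sum runs over all subsets of `{m ∈ M : m ⊆ τ}`, so it is `1` if that family is empty
and `0` otherwise; and since every member of `ψ` contains a minimal one, `{m ∈ M : m ⊆ τ}` is
empty exactly when `τ ∉ UP(ψ)`.
-/

open Finset

theorem Finset.sum_powerset_filter_superset_neg_one_pow_card {α : Type*} [DecidableEq α]
    (A σ : Finset α) :
    ∑ τ ∈ σ.powerset with A ⊆ τ, (-1 : ℤ) ^ #τ = if A = σ then (-1 : ℤ) ^ #σ else 0 := by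
  by_cases hAσ : A ⊆ σ
  · have hIcc : {τ ∈ σ.powerset | A ⊆ τ} = Icc A σ := by
      ext τ
      simp only [mem_filter, mem_powerset, mem_Icc, and_comm]
    have hinj : Set.InjOn (A ∪ ·) ((σ \ A).powerset : Set (Finset α)) := by
      intro s hs t ht hst
      simp only [coe_powerset, Set.mem_preimage, Set.mem_powerset_iff, coe_subset] at hs ht
      rw [← union_sdiff_cancel_left (disjoint_of_subset_right hs disjoint_sdiff),
        ← union_sdiff_cancel_left (disjoint_of_subset_right ht disjoint_sdiff)]
      exact congrArg (· \ A) hst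
    rw [hIcc, Icc_eq_image_powerset hAσ, sum_image hinj]
    calc ∑ s ∈ (σ \ A).powerset, (-1 : ℤ) ^ #(A ∪ s)
        = ∑ s ∈ (σ \ A).powerset, (-1 : ℤ) ^ #A * (-1 : ℤ) ^ #s := by
          refine sum_congr rfl fun s hs => ?_
          rw [card_union_of_disjoint
            (disjoint_of_subset_right (mem_powerset.mp hs) disjoint_sdiff), pow_add]
      _ = if A = σ then (-1 : ℤ) ^ #σ else 0 := by
          rw [← mul_sum, sum_powerset_neg_one_pow_card]
          by_cases h : A = σ
          · simp [h]
          · have hσA : ¬ σ ⊆ A := fun hσA => h (hAσ.antisymm hσA)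
            simp [h, sdiff_eq_empty_iff_subset, hσA]
  · have hempty : {τ ∈ σ.powerset | A ⊆ τ} = ∅ :=
      filter_eq_empty_iff.mpr fun τ hτ hAτ => hAσ (hAτ.trans (mem_powerset.mp hτ))
    rw [hempty, sum_empty, if_neg fun h => hAσ h.le]

theorem Finset.sum_powerset_filter_sup_le_neg_one_pow_card {β : Type*} [DecidableEq β]
    [SemilatticeSup β] [OrderBot β] [DecidableLE β] (M : Finset β) (τ : β) :
    ∑ G ∈ M.powerset with G.sup id ≤ τ, (-1 : ℤ) ^ #G = if ∀ m ∈ M, ¬ m ≤ τ then 1 else 0 := by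
  have hpowerset : {G ∈ M.powerset | G.sup id ≤ τ} = {m ∈ M | m ≤ τ}.powerset := by
    ext G
    simp only [mem_filter, mem_powerset, Finset.sup_le_iff, id, subset_iff]
    grind
  simp only [hpowerset, sum_powerset_neg_one_pow_card, filter_eq_empty_iff]

/-- For every family `ψ` of subsets of `{1,…,k}` and every `σ ⊆ {1,…,k}`,
`(−1)^{|σ|} · ∑_{G ⊆ Min(ψ), ⋃G = σ} (−1)^{|G|} = ∑_{τ ⊆ σ, τ ∉ UP(ψ)} (−1)^{|τ|}`,
where `Min(ψ)` is the set of minimal elements of `ψ` under inclusion and `UP(ψ)` is the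
upward closure of `ψ`. -/
theorem stmt_1 (k : ℕ) (ψ : Finset (Finset (Fin k))) (σ : Finset (Fin k)) :
    (-1 : ℤ) ^ σ.card *
      ∑ G ∈ ((ψ.filter fun ρ => ∀ ρ' ∈ ψ, ρ' ⊆ ρ → ρ' = ρ).powerset.filter
        fun G => G.sup id = σ), (-1 : ℤ) ^ G.card
    = ∑ τ ∈ σ.powerset.filter (fun τ => ¬ ∃ ρ ∈ ψ, ρ ⊆ τ), (-1 : ℤ) ^ τ.card := by
  set M := ψ.filter fun ρ => ∀ ρ' ∈ ψ, ρ' ⊆ ρ → ρ' = ρ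
  have hUP (τ : Finset (Fin k)) : (∀ m ∈ M, ¬ m ⊆ τ) ↔ ¬ ∃ ρ ∈ ψ, ρ ⊆ τ := by
    refine ⟨fun h ⟨ρ, hρ, hρτ⟩ => ?_, fun h m hm hmτ => h ⟨m, (mem_filter.mp hm).1, hmτ⟩⟩
    obtain ⟨m, hmρ, hm⟩ := exists_minimal_le_of_wellFoundedLT (· ∈ ψ) ρ hρ
    exact h m (mem_filter.mpr ⟨hm.prop, fun ρ' hρ' hle => hm.eq_of_le hρ' hle⟩) (hmρ.trans hρτ)
  calc (-1 : ℤ) ^ #σ * ∑ G ∈ M.powerset with G.sup id = σ, (-1 : ℤ) ^ #G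
      = ∑ G ∈ M.powerset, ∑ τ ∈ σ.powerset with G.sup id ⊆ τ, (-1 : ℤ) ^ #τ * (-1) ^ #G := by
        rw [mul_sum, sum_filter]
        refine sum_congr rfl fun G _ => ?_
        rw [← sum_mul, sum_powerset_filter_superset_neg_one_pow_card]
        split_ifs <;> ring
    _ = ∑ τ ∈ σ.powerset, ∑ G ∈ M.powerset with G.sup id ⊆ τ, (-1 : ℤ) ^ #τ * (-1) ^ #G :=
        sum_comm' fun G τ => by simp only [mem_filter, mem_powerset]; tauto
    _ = ∑ τ ∈ σ.powerset with ¬ ∃ ρ ∈ ψ, ρ ⊆ τ, (-1 : ℤ) ^ #τ := by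
        rw [sum_filter]
        refine sum_congr rfl fun τ _ => ?_
        rw [← mul_sum, sum_powerset_filter_sup_le_neg_one_pow_card M τ]
        simp only [hUP, mul_ite, mul_one, mul_zero]
end

section
/- For every family ψ of subsets of {1,…,k} and every nonempty σ ⊆ {1,…,k}: (−1)^{|σ|} · ∑_{G ⊆ Min(ψ), ⋃G = σ} (−1)^{|G|} = − ∑_{τ ∈ UP(ψ), τ ⊆ σ} (−1)^{|τ|}. -/
open Finset

lemma aux_sum_superset {k : ℕ} (A σ : Finset (Fin k)) :
    ∑ τ ∈ σ.powerset.filter (fun τ => A ⊆ τ), (-1 : ℤ) ^ τ.card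
      = if A = σ then (-1 : ℤ) ^ σ.card else 0 := by
  by_cases hA : A ⊆ σ
  · have key : ∑ τ ∈ σ.powerset.filter (fun τ => A ⊆ τ), (-1 : ℤ) ^ τ.card
        = ∑ B ∈ (σ \ A).powerset, (-1 : ℤ) ^ A.card * (-1 : ℤ) ^ B.card := by
      refine Finset.sum_nbij' (fun τ => τ \ A) (fun B => B ∪ A) ?_ ?_ ?_ ?_ ?_
      · intro τ hτ
        simp only [mem_filter, mem_powerset] at hτ ⊢
        exact sdiff_subset_sdiff hτ.1 Subset.rfl
      · intro B hB
        simp only [mem_filter, mem_powerset] at hB ⊢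
        constructor
        · exact union_subset (hB.trans sdiff_subset) hA
        · exact subset_union_right
      · intro τ hτ
        simp only [mem_filter, mem_powerset] at hτ
        exact sdiff_union_of_subset hτ.2
      · intro B hB
        simp only [mem_powerset] at hB
        have : Disjoint B A := disjoint_of_subset_left hB sdiff_disjoint
        exact union_sdiff_cancel_right this
      · intro τ hτ
        simp only [mem_filter, mem_powerset] at hτ
        rw [← pow_add]
        congr 1
        rw [add_comm]
        exact (Finset.card_sdiff_add_card_eq_card hτ.2).symm
    rw [key, ← Finset.mul_sum, Finset.sum_powerset_neg_one_pow_card]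
    by_cases h : A = σ
    · subst h
      simp
    · have : σ \ A ≠ ∅ := by
        intro he
        exact h (Subset.antisymm hA (by rwa [← sdiff_eq_empty_iff_subset]))
      simp [h, this]
  · have h1 : σ.powerset.filter (fun τ => A ⊆ τ) = ∅ := by
      ext τ
      simp only [mem_filter, mem_powerset, notMem_empty, iff_false, not_and]
      intro hτ hAτ
      exact hA (hAτ.trans hτ)
    have h2 : A ≠ σ := fun h => hA (h ▸ Subset.rfl)
    simp [h1, h2]

lemma aux_main {k : ℕ} (σ : Finset (Fin k)) (M : Finset (Finset (Fin k))) :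
    (-1 : ℤ) ^ σ.card *
      ∑ G ∈ (M.powerset.filter fun G => G.sup id = σ), (-1 : ℤ) ^ G.card
      = ∑ τ ∈ σ.powerset.filter (fun τ => ¬ ∃ ρ ∈ M, ρ ⊆ τ), (-1 : ℤ) ^ τ.card := by
  have h2 : ((-1:ℤ)^σ.card) * ((-1:ℤ)^σ.card) = 1 := by
    rw [← pow_add, ← two_mul, pow_mul]; norm_num
  rw [Finset.sum_filter]
  have step1 : ∀ G ∈ M.powerset,
      (if G.sup id = σ then (-1 : ℤ) ^ G.card else 0)
      = (-1 : ℤ) ^ σ.card * ∑ τ ∈ σ.powerset,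
          if G.sup id ⊆ τ then (-1 : ℤ) ^ G.card * (-1 : ℤ) ^ τ.card else 0 := by
    intro G _
    rw [← Finset.sum_filter, ← Finset.mul_sum, aux_sum_superset]
    by_cases h : G.sup id = σ
    · rw [if_pos h, if_pos h, mul_comm ((-1:ℤ)^G.card), ← mul_assoc, h2, one_mul]
    · simp [h]
  rw [Finset.sum_congr rfl step1, ← Finset.mul_sum, ← mul_assoc, h2, one_mul,
    Finset.sum_comm]
  have step2 : ∀ τ ∈ σ.powerset,
      (∑ G ∈ M.powerset, if G.sup id ⊆ τ then (-1 : ℤ) ^ G.card * (-1 : ℤ) ^ τ.card else 0)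
      = if (¬ ∃ ρ ∈ M, ρ ⊆ τ) then (-1 : ℤ) ^ τ.card else 0 := by
    intro τ _
    rw [← Finset.sum_filter]
    have hfe : M.powerset.filter (fun G => G.sup id ⊆ τ)
        = (M.filter (fun ρ => ρ ⊆ τ)).powerset := by
      ext G
      simp only [mem_filter, mem_powerset]
      constructor
      · rintro ⟨hGM, hsup⟩ ρ hρ
        exact mem_filter.mpr ⟨hGM hρ, (Finset.le_sup (f := id) hρ).trans hsup⟩
      · intro h
        exact ⟨fun ρ hρ => (mem_filter.mp (h hρ)).1,
          Finset.sup_le fun ρ hρ => (mem_filter.mp (h hρ)).2⟩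
    rw [hfe]
    simp only [mul_comm]
    rw [← Finset.mul_sum, Finset.sum_powerset_neg_one_pow_card]
    by_cases h : ∃ ρ ∈ M, ρ ⊆ τ
    · have hne : M.filter (fun ρ => ρ ⊆ τ) ≠ ∅ := by
        obtain ⟨ρ, hρ, hsub⟩ := h
        exact Finset.ne_empty_of_mem (mem_filter.mpr ⟨hρ, hsub⟩)
      rw [if_neg hne, if_neg (by simpa using h), mul_zero]
    · have he : M.filter (fun ρ => ρ ⊆ τ) = ∅ :=
        Finset.filter_eq_empty_iff.mpr (by push_neg at h; exact fun ρ hρ => h ρ hρ)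
      rw [if_pos he, if_pos h, mul_one]
  rw [Finset.sum_congr rfl step2, ← Finset.sum_filter]

/-- For every family `ψ` of subsets of `{1,…,k}` and every nonempty
`σ ⊆ {1,…,k}`,
`(−1)^{|σ|} · ∑_{G ⊆ Min(ψ), ⋃G = σ} (−1)^{|G|} = − ∑_{τ ∈ UP(ψ), τ ⊆ σ} (−1)^{|τ|}`,
where `Min(ψ)` is the set of minimal elements of `ψ` under inclusion and `UP(ψ)` is the
upward closure of `ψ`. -/
theorem stmt_2 (k : ℕ) (ψ : Finset (Finset (Fin k))) (σ : Finset (Fin k))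
    (hσ : σ.Nonempty) :
    (-1 : ℤ) ^ σ.card *
      ∑ G ∈ ((ψ.filter fun ρ => ∀ ρ' ∈ ψ, ρ' ⊆ ρ → ρ' = ρ).powerset.filter
        fun G => G.sup id = σ), (-1 : ℤ) ^ G.card
    = - ∑ τ ∈ σ.powerset.filter (fun τ => ∃ ρ ∈ ψ, ρ ⊆ τ), (-1 : ℤ) ^ τ.card := by
  set M := ψ.filter fun ρ => ∀ ρ' ∈ ψ, ρ' ⊆ ρ → ρ' = ρ with hM
  have hmin : ∀ ρ ∈ ψ, ∃ ρ' ∈ M, ρ' ⊆ ρ := by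
    intro ρ hρ
    induction ρ using Finset.strongInductionOn with
    | _ ρ ih =>
      by_cases h : ∀ ρ' ∈ ψ, ρ' ⊆ ρ → ρ' = ρ
      · exact ⟨ρ, mem_filter.mpr ⟨hρ, h⟩, Subset.rfl⟩
      · push_neg at h
        obtain ⟨ρ', hρ'ψ, hsub, hne⟩ := h
        obtain ⟨ρ'', hρ''M, hρ''⟩ := ih ρ' (lt_of_le_of_ne hsub hne) hρ'ψ
        exact ⟨ρ'', hρ''M, hρ''.trans hsub⟩
  have hUP : σ.powerset.filter (fun τ => ∃ ρ ∈ ψ, ρ ⊆ τ)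
      = σ.powerset.filter (fun τ => ∃ ρ ∈ M, ρ ⊆ τ) := by
    apply filter_congr
    intro τ _
    constructor
    · rintro ⟨ρ, hρ, hsub⟩
      obtain ⟨ρ', hρ'M, hρ'⟩ := hmin ρ hρ
      exact ⟨ρ', hρ'M, hρ'.trans hsub⟩
    · rintro ⟨ρ, hρ, hsub⟩
      exact ⟨ρ, (mem_filter.mp hρ).1, hsub⟩
  rw [hUP, aux_main σ M]
  have hzero : ∑ τ ∈ σ.powerset.filter (fun τ => ∃ ρ ∈ M, ρ ⊆ τ), (-1 : ℤ) ^ τ.card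
      + ∑ τ ∈ σ.powerset.filter (fun τ => ¬ ∃ ρ ∈ M, ρ ⊆ τ), (-1 : ℤ) ^ τ.card = 0 := by
    rw [Finset.sum_filter_add_sum_filter_not, Finset.sum_powerset_neg_one_pow_card,
      if_neg (Finset.nonempty_iff_ne_empty.mp hσ)]
  linarith
end

section
/- Let ψ be a family of subsets of {1,…,k} and S̄ = (S_1, …, S_k) a k-tuple of finite sets. Then ∑_{T ⊆ Π_ψ(S̄), π_i(T) = S_i for all i} (−1)^{|T|} = (−1)^{|S̄|} · ∑_{R̄ ⊆ S̄, sig(R̄) ∉ UP(ψ)} (−1)^{|R̄|}, where R̄ ⊆ S̄ means R_i ⊆ S_i for all i. -/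
open Finset

/-- `PiPsi ψ S` is `Π_ψ(S̄)`: the set of tuples `x ∈ (S_1 ∪ {*}) × … × (S_k ∪ {*})`
(with `* = none`) whose support `{i : x i ≠ *}` belongs to `ψ`. -/
def PiPsi {α : Type*} [DecidableEq α] {k : ℕ} (ψ : Finset (Finset (Fin k)))
    (S : Fin k → Finset α) : Finset (Fin k → Option α) :=
  (Fintype.piFinset fun i => insert none ((S i).image some)).filter
    fun x => (Finset.univ.filter fun i => x i ≠ none) ∈ ψ

section Aux

variable {α : Type*} [DecidableEq α] {k : ℕ} (ψ : Finset (Finset (Fin k)))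

lemma mem_PiPsi {x : Fin k → Option α} {S : Fin k → Finset α} :
    x ∈ PiPsi ψ S ↔ (∀ i a, x i = some a → a ∈ S i) ∧
      (Finset.univ.filter fun i => x i ≠ none) ∈ ψ := by
  simp only [PiPsi, mem_filter, Fintype.mem_piFinset, mem_insert, mem_image]
  refine and_congr_left fun _ => ⟨fun h1 i a ha => ?_, fun h1 i => ?_⟩
  · rcases h1 i with h | ⟨b, hb, hb'⟩
    · rw [h] at ha; cases ha
    · rw [← hb'] at ha
      cases ha
      exact hb
  · cases hx : x i with
    | none => exact Or.inl rfl
    | some a => exact Or.inr ⟨a, h1 i a hx, rfl⟩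

/-- `F ψ R` is the LHS sum with `S := R`. -/
noncomputable def Faux (R : Fin k → Finset α) : ℤ :=
  ∑ T ∈ ((PiPsi ψ R).powerset.filter
      fun T => ∀ i, T.biUnion (fun x => (x i).toFinset) = R i), (-1 : ℤ) ^ T.card

lemma fiber_eq {R S : Fin k → Finset α} (hRS : ∀ i, R i ⊆ S i) :
    ((PiPsi ψ S).powerset.filter
        fun T => ∀ i, T.biUnion (fun x => (x i).toFinset) = R i)
    = ((PiPsi ψ R).powerset.filter
        fun T => ∀ i, T.biUnion (fun x => (x i).toFinset) = R i) := by
  ext T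
  simp only [mem_filter, mem_powerset]
  constructor
  · rintro ⟨hT, hproj⟩
    refine ⟨fun x hx => ?_, hproj⟩
    rw [mem_PiPsi]
    have hmem := (mem_PiPsi ψ).1 (hT hx)
    refine ⟨fun i a ha => ?_, hmem.2⟩
    rw [← hproj i]
    simp only [mem_biUnion]
    exact ⟨x, hx, by simp [ha]⟩
  · rintro ⟨hT, hproj⟩
    refine ⟨fun x hx => ?_, hproj⟩
    rw [mem_PiPsi]
    have := (mem_PiPsi ψ).1 (hT hx)
    exact ⟨fun i a ha => hRS i (this.1 i a ha), this.2⟩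

lemma key_sum (S : Fin k → Finset α) :
    ∑ R ∈ Fintype.piFinset (fun i => (S i).powerset), Faux ψ R
      = if PiPsi ψ S = ∅ then 1 else 0 := by
  rw [← Finset.sum_powerset_neg_one_pow_card (x := PiPsi ψ S)]
  have hmaps : ∀ T ∈ (PiPsi ψ S).powerset,
      (fun i => T.biUnion fun x => (x i).toFinset)
        ∈ Fintype.piFinset fun i => (S i).powerset := by
    intro T hT
    simp only [mem_powerset] at hT
    simp only [Fintype.mem_piFinset, mem_powerset]
    intro i a ha
    simp only [mem_biUnion, Option.mem_toFinset, Option.mem_def] at ha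
    obtain ⟨x, hx, hxi⟩ := ha
    exact ((mem_PiPsi ψ).1 (hT hx)).1 i a hxi
  have hfib := Finset.sum_fiberwise_of_maps_to hmaps (fun T => (-1 : ℤ) ^ T.card)
  rw [← hfib]
  refine Finset.sum_congr rfl fun R hR => ?_
  simp only [Fintype.mem_piFinset, mem_powerset] at hR
  rw [Faux, ← fiber_eq ψ hR]
  congr 1
  ext T
  simp [funext_iff]

lemma piPsi_empty_iff (S : Fin k → Finset α) :
    PiPsi ψ S = ∅ ↔ ¬ ∃ ρ ∈ ψ, ρ ⊆ Finset.univ.filter fun i => (S i).Nonempty := by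
  rw [← not_nonempty_iff_eq_empty, not_iff_not]
  constructor
  · rintro ⟨x, hx⟩
    rw [mem_PiPsi] at hx
    refine ⟨_, hx.2, fun i hi => ?_⟩
    simp only [mem_filter, mem_univ, true_and] at hi ⊢
    cases hxi : x i with
    | none => exact absurd hxi hi
    | some a => exact ⟨a, hx.1 i a hxi⟩
  · rintro ⟨ρ, hρ, hsub⟩
    have hne : ∀ i ∈ ρ, (S i).Nonempty := fun i hi => by
      have := hsub hi; simp only [mem_filter] at this; exact this.2
    refine ⟨fun i => if h : i ∈ ρ then some ((hne i h).choose) else none, ?_⟩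
    rw [mem_PiPsi]
    constructor
    · intro i a ha
      by_cases h : i ∈ ρ
      · simp only [dif_pos h] at ha
        cases ha
        exact (hne i h).choose_spec
      · simp [dif_neg h] at ha
    · have : (Finset.univ.filter fun i =>
          (if h : i ∈ ρ then some ((hne i h).choose) else none) ≠ none) = ρ := by
        ext i
        simp only [mem_filter, mem_univ, true_and]
        by_cases h : i ∈ ρ <;> simp [h]
      rw [this]
      exact hρ

lemma interval_sum {β : Type*} [DecidableEq β] {Q S : Finset β} (hQS : Q ⊆ S) :
    ∑ r ∈ S.powerset.filter (fun r => Q ⊆ r), (-1 : ℤ) ^ r.card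
      = if Q = S then (-1 : ℤ) ^ S.card else 0 := by
  have hbij : ∑ r ∈ S.powerset.filter (fun r => Q ⊆ r), (-1 : ℤ) ^ r.card
      = ∑ B ∈ (S \ Q).powerset, (-1 : ℤ) ^ B.card * (-1 : ℤ) ^ Q.card := by
    refine Finset.sum_bij' (fun r _ => r \ Q) (fun B _ => B ∪ Q) ?_ ?_ ?_ ?_ ?_
    · intro r hr
      simp only [mem_filter, mem_powerset] at hr
      exact mem_powerset.2 (sdiff_subset_sdiff hr.1 Subset.rfl)
    · intro B hB
      simp only [mem_powerset] at hB
      simp only [mem_filter, mem_powerset]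
      exact ⟨union_subset (hB.trans (sdiff_subset)) hQS, subset_union_right⟩
    · intro r hr
      simp only [mem_filter, mem_powerset] at hr
      exact sdiff_union_of_subset hr.2
    · intro B hB
      simp only [mem_powerset] at hB
      have hd : Disjoint B Q := Disjoint.mono_left hB sdiff_disjoint
      show (B ∪ Q) \ Q = B
      rw [union_sdiff_right, sdiff_eq_self_of_disjoint hd]
    · intro r hr
      simp only [mem_filter, mem_powerset] at hr
      rw [← pow_add, card_sdiff_add_card_eq_card hr.2]
  rw [hbij, ← Finset.sum_mul, Finset.sum_powerset_neg_one_pow_card]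
  by_cases h : Q = S
  · subst h
    rw [if_pos rfl, if_pos (by simp), one_mul]
  · rw [if_neg (fun he => h (Subset.antisymm hQS (sdiff_eq_empty_iff_subset.mp he))),
      zero_mul, if_neg h]

end Aux

/-- For a family `ψ` of subsets of `{1,…,k}` and a `k`-tuple `S̄` of finite
sets, `∑_{T ⊆ Π_ψ(S̄), π_i(T) = S_i ∀i} (−1)^{|T|}
  = (−1)^{|S̄|} · ∑_{R̄ ⊆ S̄, sig(R̄) ∉ UP(ψ)} (−1)^{|R̄|}`,
where `π_i(T) = {x_i : x ∈ T, x_i ≠ *}`, `sig(R̄) = {i : R_i ≠ ∅}` and `UP(ψ)` is the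
upward closure of `ψ`. -/
theorem stmt_3 {α : Type*} [DecidableEq α] (k : ℕ) (ψ : Finset (Finset (Fin k)))
    (S : Fin k → Finset α) :
    ∑ T ∈ ((PiPsi ψ S).powerset.filter
        fun T => ∀ i, T.biUnion (fun x => (x i).toFinset) = S i), (-1 : ℤ) ^ T.card
    = (-1 : ℤ) ^ (∑ i, (S i).card) *
      ∑ R ∈ ((Fintype.piFinset fun i => (S i).powerset).filter
        fun R => ¬ ∃ ρ ∈ ψ, ρ ⊆ Finset.univ.filter fun i => (R i).Nonempty),
        (-1 : ℤ) ^ (∑ i, (R i).card) := by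
  show Faux ψ S = _
  have hstep : ∀ R : Fin k → Finset α,
      (if ¬ ∃ ρ ∈ ψ, ρ ⊆ Finset.univ.filter (fun i => (R i).Nonempty) then
        (-1 : ℤ) ^ (∑ i, (R i).card) else 0)
      = ∑ Q ∈ Fintype.piFinset (fun i => (R i).powerset),
          (-1 : ℤ) ^ (∑ i, (R i).card) * Faux ψ Q := by
    intro R
    rw [← Finset.mul_sum, key_sum]
    simp only [piPsi_empty_iff]
    by_cases h : ¬ ∃ ρ ∈ ψ, ρ ⊆ Finset.univ.filter fun i => (R i).Nonempty <;>
      simp [h]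
  have hcond : ∀ (R Q : Fin k → Finset α),
      R ∈ (Fintype.piFinset fun i => (S i).powerset) ∧
        Q ∈ Fintype.piFinset (fun i => (R i).powerset)
      ↔ R ∈ Fintype.piFinset (fun i => (S i).powerset.filter fun r => Q i ⊆ r) ∧
        Q ∈ (Fintype.piFinset fun i => (S i).powerset) := by
    intro R Q
    simp only [Fintype.mem_piFinset, mem_powerset, mem_filter]
    constructor
    · rintro ⟨h1, h2⟩
      exact ⟨fun i => ⟨h1 i, h2 i⟩, fun i => (h2 i).trans (h1 i)⟩
    · rintro ⟨h1, _⟩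
      exact ⟨fun i => (h1 i).1, fun i => (h1 i).2⟩
  have hinner : ∀ Q ∈ Fintype.piFinset (fun i => (S i).powerset),
      ∑ R ∈ Fintype.piFinset (fun i => (S i).powerset.filter fun r => Q i ⊆ r),
        (-1 : ℤ) ^ (∑ i, (R i).card)
      = if Q = S then (-1 : ℤ) ^ (∑ i, (S i).card) else 0 := by
    intro Q hQ
    simp only [Fintype.mem_piFinset, mem_powerset] at hQ
    have hpow : ∀ R : Fin k → Finset α,
        (-1 : ℤ) ^ (∑ i, (R i).card) = ∏ i, (-1 : ℤ) ^ (R i).card :=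
      fun R => (Finset.prod_pow_eq_pow_sum _ _ _).symm
    simp only [hpow]
    rw [show (∑ R ∈ Fintype.piFinset fun i => (S i).powerset.filter fun r => Q i ⊆ r,
          ∏ i, (-1 : ℤ) ^ (R i).card)
        = ∏ i, ∑ r ∈ (S i).powerset.filter fun r => Q i ⊆ r, (-1 : ℤ) ^ r.card
        from (Finset.prod_univ_sum (fun i => (S i).powerset.filter fun r => Q i ⊆ r)
          (fun _ r => (-1 : ℤ) ^ r.card)).symm]
    rw [Finset.prod_congr rfl fun i _ => interval_sum (hQ i)]
    by_cases h : ∀ i, Q i = S i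
    · rw [if_pos (funext h), Finset.prod_congr rfl fun i _ => if_pos (h i),
        Finset.prod_pow_eq_pow_sum]
    · push_neg at h
      obtain ⟨i, hi⟩ := h
      rw [if_neg (fun he => hi (congrFun he i))]
      exact Finset.prod_eq_zero (mem_univ i)
        (show (if Q i = S i then (-1 : ℤ) ^ (S i).card else 0) = 0 from if_neg hi)
  conv_rhs => rw [Finset.sum_filter]
  rw [Finset.sum_congr rfl fun R _ => hstep R, Finset.sum_comm' hcond]
  have hin2 : ∀ Q ∈ Fintype.piFinset (fun i => (S i).powerset),
      ∑ R ∈ Fintype.piFinset (fun i => (S i).powerset.filter fun r => Q i ⊆ r),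
        (-1 : ℤ) ^ (∑ i, (R i).card) * Faux ψ Q
      = (if Q = S then (-1 : ℤ) ^ (∑ i, (S i).card) else 0) * Faux ψ Q := by
    intro Q hQ
    rw [← Finset.sum_mul, hinner Q hQ]
  rw [Finset.sum_congr rfl hin2]
  simp only [ite_mul, zero_mul]
  rw [Finset.sum_ite_eq' (Fintype.piFinset fun i => (S i).powerset) S
    (fun Q => (-1 : ℤ) ^ (∑ i, (S i).card) * Faux ψ Q)]
  rw [if_pos (by simp [Fintype.mem_piFinset])]
  rw [← mul_assoc, ← pow_add, Even.neg_one_pow ⟨_, rfl⟩, one_mul]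
end

section
/- Let ψ be a family of subsets of {1,…,k} and S̄ = (S_1, …, S_k) a k-tuple of finite sets. Then ∑_{T ⊆ Π_ψ(S̄), π_i(T) = S_i for all i} (−1)^{|T|} = (−1)^{|S̄| + |sig(S̄)|} · ∑_{G ⊆ Min(ψ), ⋃G = sig(S̄)} (−1)^{|G|}. -/
open Finset

lemma sum_pow_sdiff {β : Type*} [DecidableEq β] (A S : Finset β) :
    ∑ C ∈ S.powerset.filter (fun C => A ⊆ C), (-1:ℤ)^(S \ C).card
      = if A = S then 1 else 0 := by
  by_cases hAS : A ⊆ S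
  · have hbij : ∑ C ∈ S.powerset.filter (fun C => A ⊆ C), (-1:ℤ)^(S \ C).card
        = ∑ D ∈ (S \ A).powerset, (-1:ℤ)^D.card := by
      refine Finset.sum_nbij' (fun C => S \ C) (fun D => S \ D) ?_ ?_ ?_ ?_ ?_
      · intro C hC
        simp only [mem_filter, mem_powerset] at hC ⊢
        exact sdiff_subset_sdiff le_rfl hC.2
      · intro D hD
        simp only [mem_filter, mem_powerset] at hD ⊢
        constructor
        · exact sdiff_subset
        · intro a ha
          simp only [mem_sdiff]
          exact ⟨hAS ha, fun h => (mem_sdiff.mp (hD h)).2 ha⟩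
      · intro C hC
        simp only [mem_filter, mem_powerset] at hC
        exact Finset.sdiff_sdiff_eq_self hC.1
      · intro D hD
        simp only [mem_powerset] at hD
        exact Finset.sdiff_sdiff_eq_self (hD.trans sdiff_subset)
      · intro C hC; rfl
    rw [hbij, Finset.sum_powerset_neg_one_pow_card]
    have : S \ A = ∅ ↔ A = S := by
      rw [sdiff_eq_empty_iff_subset]
      exact ⟨fun h => hAS.antisymm h, fun h => h ▸ le_rfl⟩
    simp [this]
  · rw [Finset.filter_false_of_mem, sum_empty, if_neg]
    · rintro rfl; exact hAS le_rfl
    · intro C hC hA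
      exact hAS (hA.trans (mem_powerset.mp hC))

lemma piPsi_eq_empty_iff {α : Type*} [DecidableEq α] {k : ℕ} (ψ : Finset (Finset (Fin k)))
    (C : Fin k → Finset α) :
    PiPsi ψ C = ∅ ↔ ∀ ρ ∈ ψ, ¬ρ ⊆ Finset.univ.filter (fun i => (C i).Nonempty) := by
  rw [← not_nonempty_iff_eq_empty]
  constructor
  · intro h ρ hρ hsub
    apply h
    have hne : ∀ i ∈ ρ, (C i).Nonempty := by
      intro i hi
      simpa using hsub hi
    classical
    refine ⟨fun i => if h : i ∈ ρ then some ((hne i h).choose) else none, ?_⟩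
    simp only [PiPsi, mem_filter, Fintype.mem_piFinset]
    constructor
    · intro i
      by_cases hi : i ∈ ρ
      · simp only [dif_pos hi, mem_insert, mem_image]
        exact Or.inr ⟨_, (hne i hi).choose_spec, rfl⟩
      · simp [dif_neg hi]
    · have : (Finset.univ.filter fun i => (if h : i ∈ ρ then some ((hne i h).choose) else none) ≠ none) = ρ := by
        ext i
        by_cases hi : i ∈ ρ <;> simp [hi]
      rw [this]; exact hρ
  · rintro h ⟨x, hx⟩
    simp only [PiPsi, mem_filter, Fintype.mem_piFinset] at hx
    refine h _ hx.2 ?_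
    intro i hi
    simp only [mem_filter, mem_univ, true_and] at hi ⊢
    have := hx.1 i
    simp only [mem_insert, mem_image] at this
    rcases this with h1 | ⟨a, ha, hai⟩
    · exact absurd h1 hi
    · exact ⟨a, ha⟩

lemma piPsi_mono {α : Type*} [DecidableEq α] {k : ℕ} (ψ : Finset (Finset (Fin k)))
    {C S : Fin k → Finset α} (h : ∀ i, C i ⊆ S i) : PiPsi ψ C ⊆ PiPsi ψ S := by
  intro x hx
  simp only [PiPsi, mem_filter, Fintype.mem_piFinset] at hx ⊢
  refine ⟨fun i => ?_, hx.2⟩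
  have := hx.1 i
  simp only [mem_insert, mem_image] at this ⊢
  rcases this with h1 | ⟨a, ha, hai⟩
  · exact Or.inl h1
  · exact Or.inr ⟨a, h i ha, hai⟩

lemma subset_piPsi_iff {α : Type*} [DecidableEq α] {k : ℕ} (ψ : Finset (Finset (Fin k)))
    {S C : Fin k → Finset α} {T : Finset (Fin k → Option α)} (hT : T ⊆ PiPsi ψ S) :
    (∀ i, T.biUnion (fun x => (x i).toFinset) ⊆ C i) ↔ T ⊆ PiPsi ψ C := by
  constructor
  · intro h x hx
    have hxS := hT hx
    simp only [PiPsi, mem_filter, Fintype.mem_piFinset] at hxS ⊢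
    refine ⟨fun i => ?_, hxS.2⟩
    simp only [mem_insert, mem_image]
    cases hxi : x i with
    | none => exact Or.inl rfl
    | some a =>
      refine Or.inr ⟨a, ?_, rfl⟩
      apply h i
      simp only [mem_biUnion]
      exact ⟨x, hx, by simp [hxi]⟩
  · intro h i a ha
    simp only [mem_biUnion] at ha
    obtain ⟨x, hx, hxa⟩ := ha
    have := h hx
    simp only [PiPsi, mem_filter, Fintype.mem_piFinset] at this
    have hi := this.1 i
    simp only [mem_insert, mem_image] at hi
    cases hxi : x i with
    | none => rw [hxi] at hxa; simp at hxa
    | some b =>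
      rw [hxi] at hxa hi
      simp only [Option.toFinset_some, mem_singleton] at hxa
      subst hxa
      rcases hi with h1 | ⟨c, hc, hcb⟩
      · exact absurd h1 (by simp)
      · rwa [← Option.some_inj.mp hcb]

lemma min_cover {k : ℕ} (ψ : Finset (Finset (Fin k))) (J : Finset (Fin k))
    (h : ∀ ρ ∈ ψ.filter (fun ρ => ∀ ρ' ∈ ψ, ρ' ⊆ ρ → ρ' = ρ), ¬ρ ⊆ J) :
    ∀ ρ ∈ ψ, ¬ρ ⊆ J := by
  intro ρ hρ hsub
  obtain ⟨ρ₀, hρ₀, hmin⟩ := Finset.exists_min_image (ψ.filter (· ⊆ ρ)) Finset.card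
    ⟨ρ, by simp [hρ]⟩
  simp only [mem_filter] at hρ₀
  refine h ρ₀ ?_ (hρ₀.2.trans hsub)
  simp only [mem_filter]
  refine ⟨hρ₀.1, fun ρ' hρ' hsub' => ?_⟩
  exact Finset.eq_of_subset_of_card_le hsub'
    (hmin ρ' (by simp [hρ', hsub'.trans hρ₀.2]))

lemma factor_pos {β : Type*} [DecidableEq β] (Si : Finset β) (h : Si.Nonempty) :
    ∑ c ∈ Si.powerset, (if c.Nonempty then (-1:ℤ)^(Si \ c).card else 0)
      = -(-1)^Si.card := by
  have h1 : ∀ c ∈ Si.powerset, (if c.Nonempty then (-1:ℤ)^(Si \ c).card else 0)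
      = (-1)^(Si \ c).card - (if c = ∅ then (-1:ℤ)^(Si \ c).card else 0) := by
    intro c _
    by_cases hc : c = ∅
    · simp [hc]
    · rw [if_pos (nonempty_iff_ne_empty.mpr hc), if_neg hc, sub_zero]
  rw [Finset.sum_congr rfl h1, Finset.sum_sub_distrib]
  have h2 : ∑ c ∈ Si.powerset, (-1:ℤ)^(Si \ c).card = 0 := by
    have := sum_pow_sdiff (∅ : Finset β) Si
    rw [Finset.filter_true_of_mem (fun c _ => empty_subset c)] at this
    rw [this, if_neg (fun he => h.ne_empty he.symm)]
  have h3 : ∑ c ∈ Si.powerset, (if c = ∅ then (-1:ℤ)^(Si \ c).card else 0)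
      = (-1)^Si.card := by
    rw [Finset.sum_ite_eq' Si.powerset (∅ : Finset β) (fun c => (-1:ℤ)^(Si \ c).card),
      if_pos (empty_mem_powerset Si), sdiff_empty]
  rw [h2, h3, zero_sub]

lemma factor_neg {β : Type*} [DecidableEq β] (Si : Finset β) :
    ∑ c ∈ Si.powerset, (if ¬c.Nonempty then (-1:ℤ)^(Si \ c).card else 0)
      = (-1)^Si.card := by
  have h1 : ∀ c ∈ Si.powerset, (if ¬c.Nonempty then (-1:ℤ)^(Si \ c).card else 0)
      = (if c = ∅ then (-1:ℤ)^(Si \ c).card else 0) := by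
    intro c _
    simp [not_nonempty_iff_eq_empty]
  rw [Finset.sum_congr rfl h1,
    Finset.sum_ite_eq' Si.powerset (∅ : Finset β) (fun c => (-1:ℤ)^(Si \ c).card),
    if_pos (empty_mem_powerset Si), sdiff_empty]

lemma stepA {α : Type*} [DecidableEq α] {k : ℕ} (ψ : Finset (Finset (Fin k)))
    (S : Fin k → Finset α) :
    ∑ T ∈ ((PiPsi ψ S).powerset.filter
        fun T => ∀ i, T.biUnion (fun x => (x i).toFinset) = S i), (-1:ℤ)^T.card
    = ∑ C ∈ Fintype.piFinset (fun i => (S i).powerset),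
        (∏ i, (-1:ℤ)^(S i \ C i).card) * (if PiPsi ψ C = ∅ then 1 else 0) := by
  classical
  rw [sum_filter]
  have key : ∀ T ∈ (PiPsi ψ S).powerset,
      (if (∀ i, T.biUnion (fun x => (x i).toFinset) = S i) then (-1:ℤ)^T.card else 0)
      = ∑ C ∈ Fintype.piFinset (fun i => (S i).powerset),
          (if T ⊆ PiPsi ψ C then (∏ i, (-1:ℤ)^(S i \ C i).card) else 0) * (-1)^T.card := by
    intro T hT
    have hTs := mem_powerset.mp hT
    have h2 : (if (∀ i, T.biUnion (fun x => (x i).toFinset) = S i) then (-1:ℤ)^T.card else 0)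
        = (∏ i, if T.biUnion (fun x => (x i).toFinset) = S i then (1:ℤ) else 0) * (-1)^T.card := by
      by_cases h : ∀ i, T.biUnion (fun x => (x i).toFinset) = S i
      · rw [if_pos h, Finset.prod_congr rfl (fun i _ => if_pos (h i)), prod_const_one, one_mul]
      · push_neg at h; obtain ⟨i, hi⟩ := h
        have hz : (∏ i, if T.biUnion (fun x => (x i).toFinset) = S i then (1:ℤ) else 0) = 0 :=
          Finset.prod_eq_zero (mem_univ i) (if_neg hi)
        rw [if_neg (fun hall => hi (hall i)), hz, zero_mul]
    rw [h2]
    have h3 : ∀ i, (if T.biUnion (fun x => (x i).toFinset) = S i then (1:ℤ) else 0)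
        = ∑ c ∈ (S i).powerset,
            (if T.biUnion (fun x => (x i).toFinset) ⊆ c then (-1:ℤ)^(S i \ c).card else 0) := by
      intro i
      rw [← sum_filter, sum_pow_sdiff]
    rw [Finset.prod_congr rfl (fun i _ => h3 i), Finset.prod_univ_sum, Finset.sum_mul]
    apply Finset.sum_congr rfl
    intro C hC
    congr 1
    by_cases h : T ⊆ PiPsi ψ C
    · rw [if_pos h]
      refine Finset.prod_congr rfl (fun i _ => if_pos ?_)
      exact (subset_piPsi_iff ψ hTs).mpr h i
    · rw [if_neg h]
      have : ¬ ∀ i, T.biUnion (fun x => (x i).toFinset) ⊆ C i :=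
        fun hall => h ((subset_piPsi_iff ψ hTs).mp hall)
      push_neg at this; obtain ⟨i, hi⟩ := this
      have hz : (if T.biUnion (fun x => (x i).toFinset) ⊆ C i then (-1:ℤ)^(S i \ C i).card else 0) = 0 := if_neg hi
      exact Finset.prod_eq_zero (mem_univ i) hz
  rw [Finset.sum_congr rfl key, Finset.sum_comm]
  apply Finset.sum_congr rfl
  intro C hC
  have hCS : ∀ i, C i ⊆ S i := by
    intro i
    have := Fintype.mem_piFinset.mp hC i
    exact mem_powerset.mp this
  have hfil : (PiPsi ψ S).powerset.filter (fun T => T ⊆ PiPsi ψ C) = (PiPsi ψ C).powerset := by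
    ext T
    simp only [mem_filter, mem_powerset]
    exact ⟨fun h => h.2, fun h => ⟨h.trans (piPsi_mono ψ hCS), h⟩⟩
  calc ∑ T ∈ (PiPsi ψ S).powerset,
        (if T ⊆ PiPsi ψ C then (∏ i, (-1:ℤ)^(S i \ C i).card) else 0) * (-1)^T.card
      = ∑ T ∈ (PiPsi ψ S).powerset,
        (if T ⊆ PiPsi ψ C then (∏ i, (-1:ℤ)^(S i \ C i).card) * (-1)^T.card else 0) := by
        apply Finset.sum_congr rfl; intro T _; rw [ite_mul, zero_mul]
    _ = ∑ T ∈ (PiPsi ψ C).powerset, (∏ i, (-1:ℤ)^(S i \ C i).card) * (-1)^T.card := by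
        rw [← sum_filter, hfil]
    _ = (∏ i, (-1:ℤ)^(S i \ C i).card) * (if PiPsi ψ C = ∅ then 1 else 0) := by
        rw [← mul_sum, Finset.sum_powerset_neg_one_pow_card]

lemma stepB {α : Type*} [DecidableEq α] {k : ℕ} (ψ : Finset (Finset (Fin k)))
    (S : Fin k → Finset α) :
    ∑ C ∈ Fintype.piFinset (fun i => (S i).powerset),
        (∏ i, (-1:ℤ)^(S i \ C i).card) * (if PiPsi ψ C = ∅ then 1 else 0)
    = ∑ J ∈ (Finset.univ.filter fun i => (S i).Nonempty).powerset,
        (if ∀ ρ ∈ ψ, ¬ρ ⊆ J then ((-1:ℤ)^(∑ i, (S i).card) * (-1)^J.card) else 0) := by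
  classical
  have hmap : ∀ C ∈ Fintype.piFinset (fun i => (S i).powerset),
      (Finset.univ.filter fun i => (C i).Nonempty)
        ∈ (Finset.univ.filter fun i => (S i).Nonempty).powerset := by
    intro C hC
    rw [mem_powerset]
    intro i hi
    simp only [mem_filter, mem_univ, true_and] at hi ⊢
    exact hi.mono (mem_powerset.mp (Fintype.mem_piFinset.mp hC i))
  rw [← Finset.sum_fiberwise_of_maps_to hmap]
  apply Finset.sum_congr rfl
  intro J hJ
  have hJsub := mem_powerset.mp hJ
  have h1 : ∀ C ∈ (Fintype.piFinset fun i => (S i).powerset).filter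
      (fun C => (Finset.univ.filter fun i => (C i).Nonempty) = J),
      (∏ i, (-1:ℤ)^(S i \ C i).card) * (if PiPsi ψ C = ∅ then 1 else 0)
      = (∏ i, (-1:ℤ)^(S i \ C i).card) * (if ∀ ρ ∈ ψ, ¬ρ ⊆ J then 1 else 0) := by
    intro C hC
    have hCJ := (mem_filter.mp hC).2
    congr 1
    simp only [piPsi_eq_empty_iff ψ C, hCJ]
  rw [Finset.sum_congr rfl h1, ← Finset.sum_mul]
  have h2 : ∑ C ∈ (Fintype.piFinset fun i => (S i).powerset).filter
      (fun C => (Finset.univ.filter fun i => (C i).Nonempty) = J),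
      ∏ i, (-1:ℤ)^(S i \ C i).card
      = (-1:ℤ)^(∑ i, (S i).card) * (-1)^J.card := by
    rw [sum_filter]
    have h3 : ∀ C ∈ Fintype.piFinset (fun i => (S i).powerset),
        (if (Finset.univ.filter fun i => (C i).Nonempty) = J
          then ∏ i, (-1:ℤ)^(S i \ C i).card else 0)
        = ∏ i, (if ((C i).Nonempty ↔ i ∈ J) then (-1:ℤ)^(S i \ C i).card else 0) := by
      intro C _
      have hiff : ((Finset.univ.filter fun i => (C i).Nonempty) = J)
          ↔ ∀ i, ((C i).Nonempty ↔ i ∈ J) := by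
        simp [Finset.ext_iff]
      by_cases h : ∀ i, ((C i).Nonempty ↔ i ∈ J)
      · rw [if_pos (hiff.mpr h)]
        exact (Finset.prod_congr rfl (fun i _ => if_pos (h i))).symm
      · rw [if_neg (fun he => h (hiff.mp he))]
        obtain ⟨i, hi⟩ := not_forall.mp h
        have hz : (if ((C i).Nonempty ↔ i ∈ J) then (-1:ℤ)^(S i \ C i).card else 0) = 0 :=
          if_neg hi
        exact (Finset.prod_eq_zero (mem_univ i) hz).symm
    have h5 := Finset.prod_univ_sum (fun i => (S i).powerset)
      (fun i c => if (c.Nonempty ↔ i ∈ J) then (-1:ℤ)^(S i \ c).card else 0)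
    rw [Finset.sum_congr rfl h3, ← h5]
    have h4 : ∀ i : Fin k, (∑ c ∈ (S i).powerset,
        if (c.Nonempty ↔ i ∈ J) then (-1:ℤ)^(S i \ c).card else 0)
        = (if i ∈ J then (-1:ℤ) else 1) * (-1)^(S i).card := by
      intro i
      by_cases hi : i ∈ J
      · have hSne : (S i).Nonempty := by
          have := hJsub hi
          simp only [mem_filter, mem_univ, true_and] at this
          exact this
        simp only [hi, iff_true]
        rw [factor_pos (S i) hSne]; norm_num
      · simp only [hi, iff_false]
        rw [factor_neg (S i)]; norm_num
    rw [Finset.prod_congr rfl (fun i _ => h4 i), Finset.prod_mul_distrib,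
      Finset.prod_pow_eq_pow_sum, mul_comm]
    congr 1
    rw [Finset.prod_ite_mem, Finset.univ_inter, Finset.prod_const]
  rw [h2]
  by_cases hc : ∀ ρ ∈ ψ, ¬ρ ⊆ J
  · rw [if_pos hc, if_pos hc, mul_one]
  · rw [if_neg hc, if_neg hc, mul_zero]

lemma stepC {k : ℕ} (ψ : Finset (Finset (Fin k))) (sig : Finset (Fin k)) :
    ∑ G ∈ ((ψ.filter fun ρ => ∀ ρ' ∈ ψ, ρ' ⊆ ρ → ρ' = ρ).powerset.filter
        fun G => G.sup id = sig), (-1:ℤ)^G.card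
    = ∑ J ∈ sig.powerset, (if ∀ ρ ∈ ψ, ¬ρ ⊆ J then (-1:ℤ)^(sig \ J).card else 0) := by
  classical
  set Min := ψ.filter fun ρ => ∀ ρ' ∈ ψ, ρ' ⊆ ρ → ρ' = ρ with hMin
  rw [sum_filter]
  calc ∑ G ∈ Min.powerset, (if G.sup id = sig then (-1:ℤ)^G.card else 0)
      = ∑ G ∈ Min.powerset, ∑ J ∈ sig.powerset,
          (if G.sup id ⊆ J then (-1:ℤ)^G.card * (-1)^(sig \ J).card else 0) := by
        apply Finset.sum_congr rfl
        intro G _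
        have hsplit : (if G.sup id = sig then (-1:ℤ)^G.card else 0)
            = (-1:ℤ)^G.card * (if G.sup id = sig then 1 else 0) := by
          rw [mul_ite, mul_one, mul_zero]
        rw [hsplit, ← sum_pow_sdiff (G.sup id) sig, Finset.mul_sum, Finset.sum_filter]
    _ = ∑ J ∈ sig.powerset, ∑ G ∈ Min.powerset,
          (if G.sup id ⊆ J then (-1:ℤ)^G.card * (-1)^(sig \ J).card else 0) :=
        Finset.sum_comm
    _ = ∑ J ∈ sig.powerset, (if ∀ ρ ∈ ψ, ¬ρ ⊆ J then (-1:ℤ)^(sig \ J).card else 0) := by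
        apply Finset.sum_congr rfl
        intro J hJ
        rw [← Finset.sum_filter]
        have hfe : Min.powerset.filter (fun G => G.sup id ⊆ J)
            = (Min.filter (fun ρ => ρ ⊆ J)).powerset := by
          ext G
          simp only [mem_filter, mem_powerset]
          constructor
          · rintro ⟨hG, hsup⟩ ρ hρ
            exact mem_filter.mpr ⟨hG hρ, (Finset.le_sup (f := id) hρ).trans hsup⟩
          · intro h
            refine ⟨fun ρ hρ => (mem_filter.mp (h hρ)).1, ?_⟩
            exact Finset.sup_le (fun ρ hρ => (mem_filter.mp (h hρ)).2)
        rw [hfe, ← Finset.sum_mul, Finset.sum_powerset_neg_one_pow_card]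
        have hiff : (Min.filter (fun ρ => ρ ⊆ J) = ∅) ↔ ∀ ρ ∈ ψ, ¬ρ ⊆ J := by
          rw [Finset.filter_eq_empty_iff]
          constructor
          · intro h
            exact min_cover ψ J (fun ρ hρ => h hρ)
          · intro h ρ hρ
            exact h ρ (mem_filter.mp hρ).1
        by_cases hc : ∀ ρ ∈ ψ, ¬ρ ⊆ J
        · rw [if_pos (hiff.mpr hc), if_pos hc, one_mul]
        · rw [if_neg (fun he => hc (hiff.mp he)), if_neg hc, zero_mul]


/-- For a family `ψ` of subsets of `{1,…,k}` and a `k`-tuple `S̄` of finite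
sets, `∑_{T ⊆ Π_ψ(S̄), π_i(T) = S_i ∀i} (−1)^{|T|}
  = (−1)^{|S̄| + |sig(S̄)|} · ∑_{G ⊆ Min(ψ), ⋃G = sig(S̄)} (−1)^{|G|}`,
where `π_i(T) = {x_i : x ∈ T, x_i ≠ *}`, `sig(S̄) = {i : S_i ≠ ∅}` and `Min(ψ)` is the
set of minimal elements of `ψ` under inclusion. -/
theorem stmt_4 {α : Type*} [DecidableEq α] (k : ℕ) (ψ : Finset (Finset (Fin k)))
    (S : Fin k → Finset α) :
    ∑ T ∈ ((PiPsi ψ S).powerset.filter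
        fun T => ∀ i, T.biUnion (fun x => (x i).toFinset) = S i), (-1 : ℤ) ^ T.card
    = (-1 : ℤ) ^ ((∑ i, (S i).card) + (Finset.univ.filter fun i => (S i).Nonempty).card) *
      ∑ G ∈ ((ψ.filter fun ρ => ∀ ρ' ∈ ψ, ρ' ⊆ ρ → ρ' = ρ).powerset.filter
        fun G => G.sup id = Finset.univ.filter fun i => (S i).Nonempty),
        (-1 : ℤ) ^ G.card := by
  classical
  rw [stepA, stepB, stepC ψ (Finset.univ.filter fun i => (S i).Nonempty), Finset.mul_sum]
  apply Finset.sum_congr rfl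
  intro J hJ
  have hJsub := Finset.mem_powerset.mp hJ
  have hc := Finset.card_sdiff_add_card_eq_card hJsub
  rw [mul_ite, mul_zero]
  by_cases h : ∀ ρ ∈ ψ, ¬ρ ⊆ J
  · rw [if_pos h, if_pos h, ← pow_add, ← pow_add]
    have he : (∑ i, (S i).card) + (Finset.univ.filter fun i => (S i).Nonempty).card
        + ((Finset.univ.filter fun i => (S i).Nonempty) \ J).card
        = ((∑ i, (S i).card) + J.card)
          + 2 * ((Finset.univ.filter fun i => (S i).Nonempty) \ J).card := by
      omega
    rw [he, pow_add, pow_add, pow_mul, neg_one_sq, one_pow, mul_one, pow_add]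
  · rw [if_neg h, if_neg h]
end

section
/- Let (Ω, μ) be a probability space, k ≥ 1, U_1, …, U_k finite sets, and for each i ∈ {1,…,k} and x ∈ U_i let E(i,x) be an event. Then μ( ⋂_{i=1}^k ⋃_{x ∈ U_i} E(i,x) ) = ∑ (−1)^{k + |T_1| + … + |T_k|} · μ( ⋂_{i=1}^k ⋂_{x ∈ T_i} E(i,x) ), where the sum ranges over all k-tuples (T_1, …, T_k) with ∅ ≠ T_i ⊆ U_i for every i. -/
/-!
The indicator of `⋂ i, ⋃ x ∈ U i, E i x` is the product over `i` of the indicators of the unions.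
Expanding each factor by inclusion–exclusion as an alternating sum over the nonempty `T i ⊆ U i`
and multiplying out gives a sum over tuples `(T i)ᵢ` of signed indicators of
`⋂ i, ⋂ x ∈ T i, E i x`; integrating against `μ` yields the identity.
-/

open Finset MeasureTheory

section

variable {ι β Ω : Type*} [Fintype ι] [DecidableEq ι]

lemma Set.indicator_iInter_biUnion_eq_sum_piFinset {R : Type*} [CommRing R]
    (U : ι → Finset β) (E : ι → β → Set Ω) (ω : Ω) :
    (⋂ i, ⋃ x ∈ U i, E i x).indicator (1 : Ω → R) ω
      = ∑ T ∈ Fintype.piFinset (fun i => (U i).powerset.filter Finset.Nonempty),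
          (-1) ^ (Fintype.card ι + ∑ i, #(T i)) * (⋂ i, ⋂ x ∈ T i, E i x).indicator 1 ω := by
  have hunion (i : ι) := indicator_biUnion_eq_sum_powerset (U i) (E i) (1 : Ω → R) ω
  simp only [zsmul_eq_mul, Int.cast_pow, Int.cast_neg, Int.cast_one] at hunion
  have hinter (S : ι → Set Ω) : ∏ i, (S i).indicator (1 : Ω → R) ω = (⋂ i, S i).indicator 1 ω := by
    simpa using prod_indicator_apply Finset.univ S (fun _ => (1 : Ω → R)) ω
  calc (⋂ i, ⋃ x ∈ U i, E i x).indicator (1 : Ω → R) ω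
      = ∏ i, (⋃ x ∈ U i, E i x).indicator 1 ω := (hinter _).symm
    _ = ∑ T ∈ Fintype.piFinset (fun i => (U i).powerset.filter Finset.Nonempty),
          ∏ i, (-1) ^ (#(T i) + 1) * (⋂ x ∈ T i, E i x).indicator (1 : Ω → R) ω := by
        simp_rw [hunion, prod_univ_sum]
    _ = _ := by
        refine sum_congr rfl fun T _ => ?_
        rw [prod_mul_distrib, prod_pow_eq_pow_sum, hinter, sum_add_distrib, sum_const, card_univ,
          smul_eq_mul, mul_one, add_comm]

lemma MeasureTheory.measureReal_iInter_biUnion_eq_sum_piFinset {_ : MeasurableSpace Ω}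
    (μ : Measure Ω) [IsFiniteMeasure μ] (U : ι → Finset β) (E : ι → β → Set Ω)
    (hE : ∀ i, ∀ x ∈ U i, MeasurableSet (E i x)) :
    μ.real (⋂ i, ⋃ x ∈ U i, E i x)
      = ∑ T ∈ Fintype.piFinset (fun i => (U i).powerset.filter Finset.Nonempty),
          (-1) ^ (Fintype.card ι + ∑ i, #(T i)) * μ.real (⋂ i, ⋂ x ∈ T i, E i x) := by
  have hU : MeasurableSet (⋂ i, ⋃ x ∈ U i, E i x) :=
    .iInter fun i => measurableSet_biUnion _ (hE i)
  have hT : ∀ T ∈ Fintype.piFinset (fun i => (U i).powerset.filter Finset.Nonempty),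
      MeasurableSet (⋂ i, ⋂ x ∈ T i, E i x) := fun T hT =>
    .iInter fun i => measurableSet_biInter _ fun x hx =>
      hE i x (mem_powerset.1 (mem_filter.1 (Fintype.mem_piFinset.1 hT i)).1 hx)
  simp_rw [← integral_indicator_one hU, Set.indicator_iInter_biUnion_eq_sum_piFinset]
  rw [integral_finsetSum _ fun T hTmem =>
    ((integrable_const 1).indicator (hT T hTmem)).const_mul _]
  exact sum_congr rfl fun T hTmem => by
    rw [integral_const_mul, integral_indicator_one (hT T hTmem)]

end

theorem stmt_13_general {Ω : Type*} [MeasurableSpace Ω] (μ : Measure Ω) [IsProbabilityMeasure μ]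
    {α : Type*} (k : ℕ) (U : Fin k → Finset α)
    (E : Fin k → α → Set Ω) (hE : ∀ i x, MeasurableSet (E i x)) :
    (μ (⋂ i, ⋃ x ∈ U i, E i x)).toReal
    = ∑ T ∈ ((Fintype.piFinset fun i => (U i).powerset).filter
        fun T => ∀ i, (T i).Nonempty),
        (-1 : ℝ) ^ (k + ∑ i, (T i).card) * (μ (⋂ i, ⋂ x ∈ T i, E i x)).toReal := by
  have hfilter : ((Fintype.piFinset fun i => (U i).powerset).filter fun T => ∀ i, (T i).Nonempty)
      = Fintype.piFinset fun i => (U i).powerset.filter Finset.Nonempty := by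
    ext T
    simp only [mem_filter, Fintype.mem_piFinset, forall_and]
  rw [hfilter]
  simpa only [Fintype.card_fin, measureReal_def] using
    measureReal_iInter_biUnion_eq_sum_piFinset μ U E fun i x _ => hE i x

/-- For a probability space `(Ω, μ)`, `k ≥ 1`, finite sets `U_1, …, U_k`
and events `E(i,x)` for `x ∈ U_i`,
`μ(⋂_{i=1}^k ⋃_{x ∈ U_i} E(i,x)) = ∑ (−1)^{k+|T_1|+…+|T_k|} · μ(⋂_i ⋂_{x ∈ T_i} E(i,x))`,
the sum ranging over all tuples `(T_1,…,T_k)` with `∅ ≠ T_i ⊆ U_i` for every `i`. -/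
theorem stmt_13 {Ω : Type*} [MeasurableSpace Ω] (μ : Measure Ω) [IsProbabilityMeasure μ]
    {α : Type*} [DecidableEq α] (k : ℕ) (hk : 1 ≤ k) (U : Fin k → Finset α)
    (E : Fin k → α → Set Ω) (hE : ∀ i x, MeasurableSet (E i x)) :
    (μ (⋂ i, ⋃ x ∈ U i, E i x)).toReal
    = ∑ T ∈ ((Fintype.piFinset fun i => (U i).powerset).filter
        fun T => ∀ i, (T i).Nonempty),
        (-1 : ℝ) ^ (k + ∑ i, (T i).card) * (μ (⋂ i, ⋂ x ∈ T i, E i x)).toReal :=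
  stmt_13_general μ k U E hE
end
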